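/- arXiv:2004.12343 — 9 statements merged into one kernel-verified Lean document; each statement's English description precedes it below -/
import Mathlib

section
/- Let A be a finite-dimensional commutative algebra over a field, equipped with a nondegenerate invariant symmetric bilinear form h (i.e., h(x*y, z) = h(x, y*z) for all x, y, z). If I is a simple ideal of A (an ideal that is nontrivial as an algebra and has no proper nonzero ideals), then either I is totally isotropic for h, or A decomposes as the direct sum of I and its h-orthogonal complement, both of which are ideals on which h is nondegenerate. -/
/-- A simple ideal in a metrized commutative algebra is either totally isotropic,
or the algebra decomposes as the direct sum of the ideal and its orthogonal
complement, both of which are ideals on which the form is nondegenerate. -/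
theorem stmt_0 {F A : Type*} [Field F] [AddCommGroup A] [Module F A]
    [FiniteDimensional F A]
    (mul : A →ₗ[F] A →ₗ[F] A)
    (hcomm : ∀ x y : A, mul x y = mul y x)
    (h : A →ₗ[F] A →ₗ[F] F)
    (hsymm : ∀ x y : A, h x y = h y x)
    (hnd : ∀ x : A, (∀ y : A, h x y = 0) → x = 0)
    (hinv : ∀ x y z : A, h (mul x y) z = h x (mul y z))
    (I : Submodule F A)
    (hI : ∀ x : A, ∀ a ∈ I, mul x a ∈ I)
    (hInontriv : ∃ a ∈ I, ∃ b ∈ I, mul a b ≠ 0)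
    (hIsimple : ∀ J : Submodule F A, J ≤ I →
      (∀ a ∈ I, ∀ b ∈ J, mul a b ∈ J) → J = ⊥ ∨ J = I) :
    (∀ a ∈ I, ∀ b ∈ I, h a b = 0) ∨
    ∃ Iperp : Submodule F A,
      (∀ x : A, x ∈ Iperp ↔ ∀ a ∈ I, h x a = 0) ∧
      IsCompl I Iperp ∧
      (∀ x : A, ∀ a ∈ Iperp, mul x a ∈ Iperp) ∧
      (∀ a ∈ I, (∀ b ∈ I, h a b = 0) → a = 0) ∧
      (∀ a ∈ Iperp, (∀ b ∈ Iperp, h a b = 0) → a = 0) := by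
  set B : LinearMap.BilinForm F A := h with hB
  have hrefl : B.IsRefl := fun x y hxy => by rw [hB] at *; rw [hsymm]; exact hxy
  set P := B.orthogonal I with hP
  have hmemP : ∀ x : A, x ∈ P ↔ ∀ a ∈ I, h x a = 0 := by
    intro x
    rw [hP, LinearMap.BilinForm.mem_orthogonal_iff]
    constructor
    · intro hx a ha; rw [hsymm]; exact hx a ha
    · intro hx a ha; rw [hB, hsymm]; exact hx a ha
  -- J := I ⊓ P is an ideal inside I
  have hJ := hIsimple (I ⊓ P) inf_le_left (by
    intro a ha b hb
    refine ⟨hI a b hb.1, (hmemP _).2 ?_⟩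
    intro c hc
    rw [hcomm]
    calc h (mul b a) c = h b (mul a c) := hinv b a c
      _ = 0 := (hmemP b).1 hb.2 _ ((hcomm a c ▸ hI c a ha : mul a c ∈ I))
    )
  rcases hJ with hJbot | hJI
  · -- P ⊓ I = ⊥ case: decomposition
    right
    have hrestr : (B.restrict I).Nondegenerate := by
      constructor
      · intro ⟨a, ha⟩ ha0
        have : a ∈ I ⊓ P := ⟨ha, (hmemP a).2 fun b hb => ha0 ⟨b, hb⟩⟩
        rw [hJbot] at this
        exact Subtype.ext this
      · intro ⟨a, ha⟩ ha0
        have : a ∈ I ⊓ P := ⟨ha, (hmemP a).2 fun b hb => (hsymm a b).trans (ha0 ⟨b, hb⟩)⟩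
        rw [hJbot] at this
        exact Subtype.ext this
    have hcompl : IsCompl I P :=
      (LinearMap.BilinForm.restrict_nondegenerate_iff_isCompl_orthogonal hrefl).1 hrestr
    refine ⟨P, hmemP, hcompl, ?_, ?_, ?_⟩
    · intro x a ha
      refine (hmemP _).2 fun b hb => ?_
      rw [hcomm]
      calc h (mul a x) b = h a (mul x b) := hinv a x b
        _ = 0 := (hmemP a).1 ha _ (hI x b hb)
    · intro a ha ha0
      have : a ∈ I ⊓ P := ⟨ha, (hmemP a).2 ha0⟩
      rw [hJbot] at this; exact this
    · intro a ha ha0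
      apply hnd
      intro y
      obtain ⟨b, hb, c, hc, rfl⟩ : ∃ b ∈ I, ∃ c ∈ P, b + c = y := by
        have : y ∈ I ⊔ P := by rw [hcompl.sup_eq_top]; trivial
        rw [Submodule.mem_sup] at this
        exact this
      rw [map_add]
      rw [(hmemP a).1 ha b hb, ha0 c hc, add_zero]
  · -- I ≤ P: totally isotropic
    left
    intro a ha b hb
    have hle : I ≤ P := le_of_eq hJI.symm |>.trans inf_le_right
    exact (hmemP a).1 (hle ha) b hb
end

section
/- Let (A, *) be a finite-dimensional commutative algebra over a field of characteristic zero. Suppose there exist scalars p, q, r such that the symmetric bilinear form τ_{p,q,r}(x,y) = p·tr L(x*y) + q·tr(L(x)L(y)) + r·tr L(x)·tr L(y) is nondegenerate and invariant. Then A is semisimple: it is expressible as a direct sum of simple ideals, pairwise orthogonal with respect to τ_{p,q,r}. -/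
/-- Dieudonné-type lemma: a commutative algebra with a nondegenerate invariant trace-form
τ_{p,q,r} is a direct sum of simple ideals, pairwise orthogonal for τ_{p,q,r}. -/
theorem stmt_4 {F A : Type*} [Field F] [CharZero F] [AddCommGroup A] [Module F A]
    [FiniteDimensional F A]
    (mul : A →ₗ[F] A →ₗ[F] A)
    (hcomm : ∀ x y : A, mul x y = mul y x)
    (p q r : F)
    (T : A → A → F)
    (hT : ∀ x y : A, T x y =
      p * LinearMap.trace F A (mul (mul x y)) +
      q * LinearMap.trace F A (mul x ∘ₗ mul y) +
      r * (LinearMap.trace F A (mul x) * LinearMap.trace F A (mul y)))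
    (hTnd : ∀ x : A, (∀ y : A, T x y = 0) → x = 0)
    (hTinv : ∀ x y z : A, T (mul x y) z = T x (mul y z)) :
    ∃ (ι : Type) (_ : Fintype ι) (Is : ι → Submodule F A),
      (∀ i, ∀ x : A, ∀ a ∈ Is i, mul x a ∈ Is i) ∧
      (∀ i, (∃ a ∈ Is i, ∃ b ∈ Is i, mul a b ≠ 0) ∧
        (∀ J : Submodule F A, J ≤ Is i →
          (∀ a ∈ Is i, ∀ b ∈ J, mul a b ∈ J) → J = ⊥ ∨ J = Is i)) ∧
      iSupIndep Is ∧ (⨆ i, Is i) = ⊤ ∧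
      (∀ i j, i ≠ j → ∀ a ∈ Is i, ∀ b ∈ Is j, T a b = 0) := by
  classical
  -- bilinearity of T
  have h1 : ∀ x x' y : A, T (x + x') y = T x y + T x' y := by
    intro x x' y
    simp only [hT, map_add, LinearMap.add_apply, LinearMap.add_comp]
    ring
  have h2 : ∀ (c : F) (x y : A), T (c • x) y = c * T x y := by
    intro c x y
    simp only [hT, map_smul, LinearMap.smul_apply, LinearMap.smul_comp, smul_eq_mul]
    ring
  have h3 : ∀ x y y' : A, T x (y + y') = T x y + T x y' := by
    intro x y y'
    simp only [hT, map_add, LinearMap.add_apply, LinearMap.comp_add]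
    ring
  have h4 : ∀ (c : F) (x y : A), T x (c • y) = c * T x y := by
    intro c x y
    simp only [hT, map_smul, LinearMap.smul_apply, LinearMap.comp_smul, smul_eq_mul]
    ring
  set B : LinearMap.BilinForm F A := LinearMap.mk₂ F T h1 h2 h3 h4 with hBdef
  have hB : ∀ x y : A, B x y = T x y := fun _ _ => rfl
  have hsymm : ∀ x y : A, T x y = T y x := by
    intro x y
    rw [hT x y, hT y x, hcomm x y, LinearMap.trace_comp_comm']
    ring
  have hrefl : B.IsRefl := by
    intro x y h
    rw [hB] at h ⊢
    rw [hsymm y x]; exact h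
  have hnd : B.Nondegenerate := ⟨fun x hx => hTnd x fun y => hx y,
    fun y hy => hTnd y fun x => (hsymm y x).trans (hy x)⟩
  -- ideal predicate
  set Idl : Submodule F A → Prop := fun I => ∀ x : A, ∀ a ∈ I, mul x a ∈ I with hIdlDef
  have memIdl : ∀ I, Idl I → ∀ a ∈ I, ∀ y : A, mul a y ∈ I := by
    intro I hI a ha y
    rw [hcomm]; exact hI y a ha
  -- trace of square-zero operator is zero
  have trsq : ∀ f : A →ₗ[F] A, f ∘ₗ f = 0 → LinearMap.trace F A f = 0 := by
    intro f hf
    refine (LinearMap.isNilpotent_trace_of_isNilpotent ⟨2, ?_⟩).eq_zero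
    rw [pow_two, Module.End.mul_eq_comp, hf]
  -- square-zero ideals are trivial
  have sqzero : ∀ I, Idl I → (∀ a ∈ I, ∀ b ∈ I, mul a b = 0) → I = ⊥ := by
    intro I hI hsq
    rw [eq_bot_iff]
    intro n hn
    rw [Submodule.mem_bot]
    refine hTnd n fun z => ?_
    have e3 : LinearMap.trace F A (mul n) = 0 := by
      refine trsq _ (LinearMap.ext fun y => ?_)
      simp only [LinearMap.comp_apply, LinearMap.zero_apply]
      exact hsq n hn _ (memIdl I hI n hn y)
    have e1 : LinearMap.trace F A (mul (mul n z)) = 0 := by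
      have hm : mul n z ∈ I := memIdl I hI n hn z
      refine trsq _ (LinearMap.ext fun y => ?_)
      simp only [LinearMap.comp_apply, LinearMap.zero_apply]
      exact hsq _ hm _ (memIdl I hI _ hm y)
    have e2 : LinearMap.trace F A (mul n ∘ₗ mul z) = 0 := by
      refine trsq _ (LinearMap.ext fun y => ?_)
      simp only [LinearMap.comp_apply, LinearMap.zero_apply]
      have m1 : mul n (mul z y) ∈ I := memIdl I hI n hn _
      have m2 : mul z (mul n (mul z y)) ∈ I := hI z _ m1
      exact hsq n hn _ m2
    rw [hT, e1, e2, e3]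
    ring
  -- the orthogonal of an ideal is an ideal
  have orthIdl : ∀ I, Idl I → Idl (B.orthogonal I) := by
    intro I hI x a ha
    rw [LinearMap.BilinForm.mem_orthogonal_iff]
    intro n hn
    show B n (mul x a) = 0
    rw [hB, ← hTinv n x a]
    exact (LinearMap.BilinForm.mem_orthogonal_iff.mp ha) _ (memIdl I hI n hn x)
  -- every ideal is disjoint from its orthogonal
  have disjI : ∀ I, Idl I → Disjoint I (B.orthogonal I) := by
    intro I hI
    rw [disjoint_iff]
    refine sqzero _ ?_ ?_
    · intro x a ha
      exact Submodule.mem_inf.mpr ⟨hI x a (Submodule.mem_inf.mp ha).1,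
        orthIdl I hI x a (Submodule.mem_inf.mp ha).2⟩
    · intro a ha b hb
      refine hTnd _ fun z => ?_
      rw [hTinv a b z, hsymm]
      have hbz : mul b z ∈ I := memIdl I hI b (Submodule.mem_inf.mp hb).1 z
      exact (LinearMap.BilinForm.mem_orthogonal_iff.mp (Submodule.mem_inf.mp ha).2) _ hbz
  have hcompl : ∀ I, Idl I → IsCompl I (B.orthogonal I) := fun I hI =>
    (LinearMap.BilinForm.isCompl_orthogonal_iff_disjoint hrefl).mpr (disjI I hI)
  -- product of an ideal with its orthogonal vanishes
  have mulOrth : ∀ I, Idl I → ∀ a ∈ I, ∀ b ∈ B.orthogonal I, mul a b = 0 := by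
    intro I hI a ha b hb
    have m1 : mul a b ∈ I := memIdl I hI a ha b
    have m2 : mul a b ∈ B.orthogonal I := orthIdl I hI a b hb
    exact Submodule.disjoint_def.mp (disjI I hI) _ m1 m2
  -- main induction
  have key : ∀ (n : ℕ) (W : Submodule F A), Module.finrank F W ≤ n → Idl W →
      Disjoint W (B.orthogonal W) →
      ∃ s : Finset (Submodule F A),
        (∀ I ∈ s, Idl I) ∧
        (∀ I ∈ s, (∃ a ∈ I, ∃ b ∈ I, mul a b ≠ 0) ∧
          (∀ J : Submodule F A, J ≤ I → (∀ a ∈ I, ∀ b ∈ J, mul a b ∈ J) → J = ⊥ ∨ J = I)) ∧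
        (∀ I ∈ s, ∀ K ∈ s, I ≠ K → ∀ a ∈ I, ∀ b ∈ K, T a b = 0) ∧
        sSup (↑s : Set (Submodule F A)) = W := by
    intro n
    induction n with
    | zero =>
      intro W hrk hW _
      have hWbot : W = ⊥ := Submodule.finrank_eq_zero.mp (Nat.le_zero.mp hrk)
      exact ⟨∅, by simp, by simp, by simp, by simp [hWbot]⟩
    | succ n ih =>
      intro W hrk hW hWd
      by_cases hWbot : W = ⊥
      · exact ⟨∅, by simp, by simp, by simp, by simp [hWbot]⟩
      -- pick a minimal nonzero ideal inside W
      have hex : ∃ k, ∃ I : Submodule F A, (Idl I ∧ I ≤ W ∧ I ≠ ⊥) ∧ Module.finrank F I = k :=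
        ⟨_, W, ⟨hW, le_rfl, hWbot⟩, rfl⟩
      obtain ⟨I, ⟨hIdlI, hIW, hIne⟩, hIk⟩ := Nat.find_spec hex
      have hmin : ∀ J : Submodule F A, Idl J → J ≤ W → J ≠ ⊥ →
          Module.finrank F I ≤ Module.finrank F J := by
        intro J hJ1 hJ2 hJ3
        rw [hIk]
        exact Nat.find_min' hex ⟨J, ⟨hJ1, hJ2, hJ3⟩, rfl⟩
      have hIcompl := hcompl I hIdlI
      -- simplicity of I
      have hsimple : (∃ a ∈ I, ∃ b ∈ I, mul a b ≠ 0) ∧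
          (∀ J : Submodule F A, J ≤ I → (∀ a ∈ I, ∀ b ∈ J, mul a b ∈ J) → J = ⊥ ∨ J = I) := by
        constructor
        · by_contra hcon
          push_neg at hcon
          exact hIne (sqzero I hIdlI hcon)
        · intro J hJI hJst
          by_cases hJbot : J = ⊥
          · exact Or.inl hJbot
          right
          have hJidl : Idl J := by
            intro x b hb
            have hxtop : x ∈ I ⊔ B.orthogonal I := by
              rw [hIcompl.sup_eq_top]; exact Submodule.mem_top
            obtain ⟨yI, hyI, yO, hyO, hx⟩ := Submodule.mem_sup.mp hxtop
            have hzero : mul yO b = 0 := mulOrth I hIdlI b (hJI hb) yO hyO ▸ (hcomm yO b)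
            have : mul x b = mul yI b + mul yO b := by
              rw [← hx, map_add, LinearMap.add_apply]
            rw [this, hzero, add_zero]
            exact hJst yI hyI b hb
          exact Submodule.eq_of_le_of_finrank_le hJI
            (hmin J hJidl (hJI.trans hIW) hJbot)
      -- split off I
      set W' : Submodule F A := B.orthogonal I ⊓ W with hW'def
      have hW'Idl : Idl W' := by
        intro x a ha
        exact Submodule.mem_inf.mpr ⟨orthIdl I hIdlI x a (Submodule.mem_inf.mp ha).1,
          hW x a (Submodule.mem_inf.mp ha).2⟩
      have hWeq : I ⊔ W' = W := by
        rw [hW'def, ← sup_inf_assoc_of_le _ hIW, hIcompl.sup_eq_top, top_inf_eq]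
      have hIW'disj : I ⊓ W' = ⊥ := by
        have : I ⊓ W' ≤ I ⊓ B.orthogonal I := inf_le_inf_left I inf_le_left
        rw [(disjI I hIdlI).eq_bot] at this
        exact le_bot_iff.mp this
      -- W' is a T-nondegenerate ideal
      have hW'disj : Disjoint W' (B.orthogonal W') := by
        rw [Submodule.disjoint_def]
        intro x hx hx'
        refine hTnd x fun y => ?_
        have hWcompl := (LinearMap.BilinForm.isCompl_orthogonal_iff_disjoint (B := B)
          (W := W) hrefl).mpr hWd
        have hytop : y ∈ W ⊔ B.orthogonal W := by
          rw [hWcompl.sup_eq_top]; exact Submodule.mem_top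
        obtain ⟨w, hw, w'', hw'', hy⟩ := Submodule.mem_sup.mp hytop
        rw [← hWeq] at hw
        obtain ⟨i, hi, u, hu, hwdec⟩ := Submodule.mem_sup.mp hw
        have t1 : T x i = 0 := by
          rw [hsymm]
          exact (LinearMap.BilinForm.mem_orthogonal_iff.mp
            (Submodule.mem_inf.mp hx).1) i hi
        have t2 : T x u = 0 := by
          rw [hsymm]
          exact (LinearMap.BilinForm.mem_orthogonal_iff.mp hx') u hu
        have t3 : T x w'' = 0 := by
          exact (LinearMap.BilinForm.mem_orthogonal_iff.mp hw'') x
            ((Submodule.mem_inf.mp hx).2)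
        rw [← hy, ← hwdec, h3, h3, t1, t2, t3]
        ring
      -- finrank decreases
      have hrank : Module.finrank F W' ≤ n := by
        have hsum := Submodule.finrank_sup_add_finrank_inf_eq I W'
        rw [hWeq, hIW'disj, finrank_bot, add_zero] at hsum
        have hIpos : Module.finrank F I ≠ 0 := fun h =>
          hIne (Submodule.finrank_eq_zero.mp h)
        omega
      obtain ⟨s', hs'1, hs'2, hs'3, hs'4⟩ := ih W' hrank hW'Idl hW'disj
      have hs'le : ∀ K ∈ s', K ≤ B.orthogonal I := by
        intro K hK
        have hKW' : K ≤ W' := hs'4 ▸ le_sSup (Finset.mem_coe.mpr hK)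
        exact le_trans hKW' inf_le_left
      have hIorthK : ∀ K ∈ s', ∀ a ∈ I, ∀ b ∈ K, T a b = 0 := by
        intro K hK a ha b hb
        exact (LinearMap.BilinForm.mem_orthogonal_iff.mp (hs'le K hK hb)) a ha
      refine ⟨insert I s', ?_, ?_, ?_, ?_⟩
      · intro J hJ
        rcases Finset.mem_insert.mp hJ with h | h
        · exact h ▸ hIdlI
        · exact hs'1 J h
      · intro J hJ
        rcases Finset.mem_insert.mp hJ with h | h
        · exact h ▸ hsimple
        · exact hs'2 J h
      · intro J hJ K hK hne a ha b hb
        rcases Finset.mem_insert.mp hJ with hJ' | hJ' <;>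
          rcases Finset.mem_insert.mp hK with hK' | hK'
        · exact absurd (hJ'.trans hK'.symm) hne
        · exact hIorthK K hK' a (hJ' ▸ ha) b hb
        · rw [hsymm]; exact hIorthK J hJ' b (hK' ▸ hb) a ha
        · exact hs'3 J hJ' K hK' hne a ha b hb
      · rw [Finset.coe_insert, sSup_insert, hs'4, hWeq]
  -- apply to the whole algebra
  have htopIdl : Idl ⊤ := fun _ _ _ => Submodule.mem_top
  have htopdisj : Disjoint (⊤ : Submodule F A) (B.orthogonal ⊤) := by
    rw [LinearMap.BilinForm.orthogonal_top_eq_bot hnd]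
    exact disjoint_bot_right
  obtain ⟨s, hsIdl, hsSimple, hsOrth, hsSup⟩ :=
    key (Module.finrank F (⊤ : Submodule F A)) ⊤ le_rfl htopIdl htopdisj
  set e := Fintype.equivFin ({x // x ∈ s}) with he
  set Is : Fin (Fintype.card {x // x ∈ s}) → Submodule F A :=
    fun i => ((e.symm i : {x // x ∈ s}) : Submodule F A) with hIsdef
  have hIsmem : ∀ i, Is i ∈ s := fun i => (e.symm i).2
  have hIsinj : Function.Injective Is := fun i j h =>
    e.symm.injective (Subtype.val_injective h)
  have hIssurj : ∀ J ∈ s, ∃ i, Is i = J := by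
    intro J hJ
    exact ⟨e ⟨J, hJ⟩, by simp [hIsdef]⟩
  refine ⟨Fin (Fintype.card {x // x ∈ s}), inferInstance, Is, ?_, ?_, ?_, ?_, ?_⟩
  · exact fun i => hsIdl _ (hIsmem i)
  · exact fun i => hsSimple _ (hIsmem i)
  · intro i
    refine Disjoint.mono_right ?_ (disjI (Is i) (hsIdl _ (hIsmem i)))
    refine iSup_le fun j => iSup_le fun hne => ?_
    intro b hb
    rw [LinearMap.BilinForm.mem_orthogonal_iff]
    intro a ha
    have hne' : Is i ≠ Is j := fun h => hne (hIsinj h).symm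
    exact hsOrth _ (hIsmem i) _ (hIsmem j) hne' a ha b hb
  · refine le_antisymm le_top ?_
    rw [← hsSup]
    refine sSup_le fun J hJ => ?_
    obtain ⟨i, rfl⟩ := hIssurj J (Finset.mem_coe.mp hJ)
    exact le_iSup Is i
  · intro i j hne a ha b hb
    exact hsOrth _ (hIsmem i) _ (hIsmem j) (fun h => hne (hIsinj h)) a ha b hb
end

section
/- Let F be a field of characteristic zero and let T = T^n_α(F) be the commutative algebra with basis e_1, ..., e_n satisfying e_i*e_i = e_i and e_i*e_j = α(e_i + e_j) for i ≠ j. The Ricci form ric(x,y) = tr L(x*y) − tr L(x)·tr L(y) satisfies ric(e_i, e_i) = (n−1)α(1−α) and ric(e_i, e_j) = (n−1)α² for i ≠ j, and ric is invariant: ric(x*y, z) = ric(x, y*z) for all x, y, z. -/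
/-- The Ricci form of T^n_α(F): ric(e_i,e_i) = (n-1)α(1-α), ric(e_i,e_j) = (n-1)α²
for i ≠ j, and ric is invariant. -/
theorem stmt_9 {F A : Type*} [Field F] [CharZero F] [AddCommGroup A] [Module F A]
    [FiniteDimensional F A]
    (n : ℕ) (hn : 2 ≤ n)
    (mul : A →ₗ[F] A →ₗ[F] A)
    (hcomm : ∀ x y : A, mul x y = mul y x)
    (e : Module.Basis (Fin n) F A)
    (α : F)
    (hdiag : ∀ i, mul (e i) (e i) = e i)
    (hoff : ∀ i j, i ≠ j → mul (e i) (e j) = α • (e i + e j))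
    (ric : A → A → F)
    (hricdef : ∀ x y : A, ric x y =
      LinearMap.trace F A (mul (mul x y)) - LinearMap.trace F A (mul x ∘ₗ mul y)) :
    (∀ i, ric (e i) (e i) = ((n : F) - 1) * α * (1 - α)) ∧
    (∀ i j, i ≠ j → ric (e i) (e j) = ((n : F) - 1) * α ^ 2) ∧
    (∀ x y z : A, ric (mul x y) z = ric x (mul y z)) := by
  classical
  have hn1 : (1:ℕ) ≤ n := le_trans one_le_two hn
  -- trace via basis
  have htr : ∀ f : A →ₗ[F] A, LinearMap.trace F A f = ∑ k, e.repr (f (e k)) k := by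
    intro f
    rw [LinearMap.trace_eq_matrix_trace F e f]
    simp [Matrix.trace, Matrix.diag, LinearMap.toMatrix_apply]
  -- structure coefficients
  have hrepr : ∀ i j k, e.repr (mul (e i) (e j)) k =
      if i = j then (if i = k then 1 else 0)
      else α * ((if i = k then (1:F) else 0) + (if j = k then 1 else 0)) := by
    intro i j k
    by_cases h : i = j
    · subst h; simp [hdiag, e.repr_self, Finsupp.single_apply]
    · simp [hoff i j h, e.repr_self, Finsupp.single_apply, h, mul_add]
  -- sums with one distinguished index
  have hsum1 : ∀ (i : Fin n) (a b : F), (∑ k, if i = k then a else b)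
      = a + ((n:F)-1) * b := by
    intro i a b
    rw [← Finset.add_sum_erase _ _ (Finset.mem_univ i), if_pos rfl]
    congr 1
    rw [Finset.sum_congr rfl (fun k hk => if_neg
          (fun h => (Finset.mem_erase.mp hk).1 h.symm)),
        Finset.sum_const, Finset.card_erase_of_mem (Finset.mem_univ i)]
    simp [Nat.cast_sub hn1]
  -- sums with two distinguished indices
  have hsum2 : ∀ (i j : Fin n) (a b c : F), i ≠ j →
      (∑ k, if i = k then a else if j = k then b else c)
      = a + b + ((n:F)-2) * c := by
    intro i j a b c hij
    have hj : j ∈ Finset.univ.erase i :=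
      Finset.mem_erase.mpr ⟨fun h => hij h.symm, Finset.mem_univ j⟩
    rw [← Finset.add_sum_erase _ _ (Finset.mem_univ i), if_pos rfl,
        ← Finset.add_sum_erase _ _ hj, if_neg hij, if_pos rfl, ← add_assoc]
    congr 1
    have hc : ∀ k ∈ (Finset.univ.erase i).erase j,
        (if i = k then a else if j = k then b else c) = c := by
      intro k hk
      obtain ⟨hkj, hk'⟩ := Finset.mem_erase.mp hk
      obtain ⟨hki, -⟩ := Finset.mem_erase.mp hk'
      rw [if_neg (fun h => hki h.symm), if_neg (fun h => hkj h.symm)]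
    have hcast : ((n - 1 - 1 : ℕ) : F) = (n:F) - 2 := by
      have h2 : n - 1 - 1 = n - 2 := by omega
      rw [h2, Nat.cast_sub hn]; norm_num
    rw [Finset.sum_congr rfl hc, Finset.sum_const,
        Finset.card_erase_of_mem hj, Finset.card_erase_of_mem (Finset.mem_univ i)]
    simp [hcast]
  -- trace of L(e i)
  have tr1 : ∀ i, LinearMap.trace F A (mul (e i)) = 1 + ((n:F)-1) * α := by
    intro i
    rw [htr]
    rw [Finset.sum_congr rfl (fun k _ => ?_), hsum1 i 1 α]
    rw [hrepr]
    by_cases h : i = k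
    · simp [h]
    · simp [h]
  -- coefficient of e k in (L(e i) ∘ L(e j)) (e k)
  have hterm : ∀ i j k, e.repr (mul (e i) (mul (e j) (e k))) k =
      if j = k then (if i = k then 1 else α)
      else if i = k then α*(α+1) else α^2 := by
    intro i j k
    by_cases hjk : j = k
    · subst hjk
      rw [hdiag, hrepr, if_pos rfl]
      by_cases hij : i = j
      · simp [hij]
      · simp [hij, if_neg hij]
    · simp only [hoff j k hjk, map_smul, map_add, Finsupp.smul_apply,
        Finsupp.add_apply, smul_eq_mul, hrepr, if_neg hjk]
      by_cases hik : i = k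
      · subst hik
        have hij : ¬ i = j := fun h => hjk h.symm
        simp [hij, hjk]
        all_goals ring
      · by_cases hij : i = j
        · subst hij
          simp [hjk, hik]
          all_goals ring
        · simp [hjk, hik, hij]
          all_goals ring
  -- trace of L(e i) ∘ L(e j)
  have tr2 : ∀ i j, LinearMap.trace F A (mul (e i) ∘ₗ mul (e j)) =
      if i = j then 1 + ((n:F)-1) * α^2 else 2*α + ((n:F)-1) * α^2 := by
    intro i j
    rw [htr]
    by_cases hij : i = j
    · subst hij
      rw [Finset.sum_congr rfl (fun k _ => ?_), hsum1 i 1 (α^2), if_pos rfl]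
      rw [LinearMap.comp_apply, hterm]
      by_cases h : i = k <;> simp [h]
    · rw [Finset.sum_congr rfl (fun k _ => ?_),
          hsum2 j i α (α*(α+1)) (α^2) (fun h => hij h.symm), if_neg hij]
      · ring
      · rw [LinearMap.comp_apply, hterm]
        by_cases hjk : j = k
        · have hik : ¬ i = k := fun h => hij (h.trans hjk.symm)
          simp [hjk, hik]
        · simp [hjk]
  -- trace of L(e_i * e_j)
  have tmul : ∀ i j, LinearMap.trace F A (mul (mul (e i) (e j))) =
      if i = j then 1 + ((n:F)-1)*α else α*(2 + 2*((n:F)-1)*α) := by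
    intro i j
    by_cases h : i = j
    · subst h; rw [hdiag, tr1, if_pos rfl]
    · rw [hoff i j h, if_neg h]
      simp only [map_smul, map_add, LinearMap.smul_apply, LinearMap.add_apply,
        smul_eq_mul, tr1]
      ring
  -- the bundled bilinear Ricci form
  set B : A →ₗ[F] A →ₗ[F] F :=
    mul.compr₂ ((LinearMap.trace F A) ∘ₗ mul) -
      ((LinearMap.llcomp F A A A).compl₁₂ mul mul).compr₂ (LinearMap.trace F A)
    with hBdef
  have hBapp : ∀ x y, B x y =
      LinearMap.trace F A (mul (mul x y)) - LinearMap.trace F A (mul x ∘ₗ mul y) := by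
    intro x y
    rfl
  have hBval : ∀ i j, B (e i) (e j) =
      if i = j then ((n:F)-1)*α*(1-α) else ((n:F)-1)*α^2 := by
    intro i j
    rw [hBapp, tmul, tr2]
    by_cases h : i = j <;> simp [h] <;> ring
  refine ⟨fun i => ?_, fun i j hij => ?_, ?_⟩
  · rw [hricdef, ← hBapp, hBval]; simp
  · rw [hricdef, ← hBapp, hBval]; simp [hij]
  · have val_eq : ∀ a, B (e a) (e a) = ((n:F)-1)*α*(1-α) := by
      intro a; rw [hBval, if_pos rfl]
    have val_ne : ∀ a b, a ≠ b → B (e a) (e b) = ((n:F)-1)*α^2 := by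
      intro a b h; rw [hBval, if_neg h]
    have key : ∀ i j k, B (mul (e i) (e j)) (e k) = B (e i) (mul (e j) (e k)) := by
      intro i j k
      by_cases hij : i = j
      · subst hij
        by_cases hjk : i = k
        · subst hjk; rw [hdiag]
        · rw [hdiag, hoff i k hjk, map_smul, map_add, smul_eq_mul,
              val_eq, val_ne i k hjk]
          ring
      · by_cases hjk : j = k
        · subst hjk
          rw [hdiag, hoff i j hij, map_smul, map_add, LinearMap.smul_apply,
              LinearMap.add_apply, smul_eq_mul, val_ne i j hij, val_eq]
          ring
        · by_cases hik : i = k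
          · subst hik
            rw [hoff i j hij, hoff j i hjk, map_smul, map_smul, map_add, map_add,
                LinearMap.smul_apply, LinearMap.add_apply, smul_eq_mul, smul_eq_mul,
                val_eq, val_ne j i hjk, val_ne i j hij]
            all_goals ring
          · rw [hoff i j hij, hoff j k hjk, map_smul, map_smul, map_add, map_add,
                LinearMap.smul_apply, LinearMap.add_apply, smul_eq_mul, smul_eq_mul,
                val_ne i k hik, val_ne j k hjk, val_ne i j hij]
            all_goals ring
    have H : mul.compr₂ B = (LinearMap.llcomp F A A F).compl₁₂ B mul := by
      refine e.ext fun i => e.ext fun j => e.ext fun k => ?_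
      simpa only [LinearMap.compr₂_apply, LinearMap.compl₁₂_apply,
        LinearMap.llcomp_apply, LinearMap.comp_apply] using key i j k
    intro x y z
    rw [hricdef, hricdef, ← hBapp, ← hBapp]
    have h3 := LinearMap.congr_fun (LinearMap.congr_fun (LinearMap.congr_fun H x) y) z
    simpa only [LinearMap.compr₂_apply, LinearMap.compl₁₂_apply,
      LinearMap.llcomp_apply, LinearMap.comp_apply] using h3
end

section
/- Let F have characteristic zero and let T^n_α(F) be the commutative algebra generated by idempotents e_1,...,e_n with e_i*e_j = α(e_i+e_j) for i≠j, where α ∉ {0, 1/2}. Then every nonzero idempotent of T^n_α(F) is of the form (1/(1−2α+2α|I|)) · Σ_{i∈I} e_i for some nonempty subset I ⊆ {1,...,n} with |I| ≠ 1 − 1/(2α), and there exists a nonzero square-zero element if and only if 1 − 1/(2α) ∈ {1,...,n}, in which case every square-zero element is a scalar multiple of Σ_{i∈I} e_i with |I| = 1 − 1/(2α). -/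
open scoped Classical in
/-- Support analysis for the coefficient equations. -/
lemma stmt_10_aux {F : Type*} [Field F] {n : ℕ} (α d : F) (h2α : 1 - 2*α ≠ 0)
    (c : Fin n → F) (hck : ∀ k, c k * (2*α*(∑ j, c j) + (1-2*α) * c k) = d * c k) :
    ∃ γ : F,
      (γ * (1 - 2*α + 2*α*(((Finset.univ.filter (fun i => c i ≠ 0)).card : F))) = d) ∧
      ∀ k, c k ≠ 0 → c k = γ := by
  set S := ∑ j, c j with hS
  set γ := (d - 2*α*S)/(1-2*α) with hγ
  set I := Finset.univ.filter (fun i => c i ≠ 0) with hI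
  have hval : ∀ k, c k ≠ 0 → c k = γ := by
    intro k hk
    have h1' : c k * (2*α*S + (1-2*α) * c k) = c k * d := by linear_combination hck k
    have h2 := mul_left_cancel₀ hk h1'
    rw [hγ]
    field_simp
    linear_combination h2
  refine ⟨γ, ?_, hval⟩
  have hSI : S = γ * I.card := by
    rw [hS, ← Finset.sum_filter_ne_zero Finset.univ]
    rw [Finset.sum_congr rfl (fun i hi => hval i (by simpa [hI] using (Finset.mem_filter.mp hi).2))]
    simp [hI, mul_comm]
  have hγd : (1-2*α) * γ = d - 2*α*S := by
    rw [hγ]; field_simp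
  rw [hSI] at hγd
  linear_combination hγd

/-- Idempotents and square-zero elements of T^n_α(F) for α ∉ {0, 1/2}. -/
theorem stmt_10 {F A : Type*} [Field F] [CharZero F] [AddCommGroup A] [Module F A]
    [FiniteDimensional F A]
    (n : ℕ) (hn : 2 ≤ n)
    (mul : A →ₗ[F] A →ₗ[F] A)
    (hcomm : ∀ x y : A, mul x y = mul y x)
    (e : Module.Basis (Fin n) F A)
    (α : F) (hα0 : α ≠ 0) (hα2 : α ≠ 1 / 2)
    (hdiag : ∀ i, mul (e i) (e i) = e i)
    (hoff : ∀ i j, i ≠ j → mul (e i) (e j) = α • (e i + e j)) :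
    (∀ x : A, x ≠ 0 → mul x x = x →
      ∃ I : Finset (Fin n), I.Nonempty ∧ (I.card : F) ≠ 1 - 1 / (2 * α) ∧
        x = (1 - 2 * α + 2 * α * (I.card : F))⁻¹ • ∑ i ∈ I, e i) ∧
    ((∃ z : A, z ≠ 0 ∧ mul z z = 0) ↔
      ∃ k : ℕ, 1 ≤ k ∧ k ≤ n ∧ (k : F) = 1 - 1 / (2 * α)) ∧
    (∀ z : A, z ≠ 0 → mul z z = 0 →
      ∃ (c : F) (I : Finset (Fin n)), (I.card : F) = 1 - 1 / (2 * α) ∧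
        z = c • ∑ i ∈ I, e i) := by
  classical
  have h2α : (1:F) - 2*α ≠ 0 := by
    intro h; exact hα2 (by linear_combination -h/2)
  -- multiplication by a basis vector
  have step1 : ∀ (x : A) (i : Fin n),
      mul (e i) x = (α*(∑ j, e.repr x j) + (1-2*α) * e.repr x i) • e i + α • x := by
    intro x i
    conv_lhs => rw [← e.sum_repr x]
    rw [map_sum]
    have hterm : ∀ j : Fin n, mul (e i) (e.repr x j • e j)
        = ((α * e.repr x j) • e i + (α * e.repr x j) • e j)
          + (if j = i then ((1-2*α) * e.repr x i) • e i else 0) := by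
      intro j
      rw [map_smul]
      by_cases hji : j = i
      · subst hji
        rw [hdiag, if_pos rfl]
        module
      · rw [hoff i j (Ne.symm hji), if_neg hji]
        module
    rw [Finset.sum_congr rfl (fun j _ => hterm j), Finset.sum_add_distrib,
      Finset.sum_add_distrib, Finset.sum_ite_eq' Finset.univ i, if_pos (Finset.mem_univ i),
      ← Finset.sum_smul, ← Finset.mul_sum]
    have : ∑ j, (α * e.repr x j) • e j = α • x := by
      conv_rhs => rw [← e.sum_repr x]
      rw [Finset.smul_sum]
      exact Finset.sum_congr rfl fun j _ => by rw [smul_smul]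
    rw [this]
    module
  -- the key formula for mul x x
  have key : ∀ x : A, mul x x
      = ∑ i, ((e.repr x i) * (2*α*(∑ j, e.repr x j) + (1-2*α) * e.repr x i)) • e i := by
    intro x
    nth_rewrite 1 [← e.sum_repr x]
    rw [map_sum, LinearMap.sum_apply]
    have hterm : ∀ i : Fin n, mul (e.repr x i • e i) x
        = (e.repr x i * (α*(∑ j, e.repr x j) + (1-2*α) * e.repr x i)) • e i
          + (α * e.repr x i) • x := by
      intro i
      rw [map_smul, LinearMap.smul_apply, step1 x i]
      module
    rw [Finset.sum_congr rfl (fun i _ => hterm i), Finset.sum_add_distrib,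
      ← Finset.sum_smul, ← Finset.mul_sum]
    have : (α * ∑ j, e.repr x j) • x = ∑ i, ((α * ∑ j, e.repr x j) * e.repr x i) • e i := by
      nth_rewrite 2 [← e.sum_repr x]
      rw [Finset.smul_sum]
      exact Finset.sum_congr rfl fun j _ => by rw [smul_smul]
    rw [this, ← Finset.sum_add_distrib]
    refine Finset.sum_congr rfl fun i _ => ?_
    module
  -- coefficients of mul x x
  have coeff : ∀ (x : A) (k : Fin n), e.repr (mul x x) k
      = e.repr x k * (2*α*(∑ j, e.repr x j) + (1-2*α) * e.repr x k) := by
    intro x k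
    rw [key x]
    rw [e.repr_sum_self]
  -- nonzero elements have a nonzero coefficient
  have hex : ∀ x : A, x ≠ 0 → ∃ k, e.repr x k ≠ 0 := by
    intro x hx
    by_contra h
    push_neg at h
    apply hx
    have h0 : e.repr x = 0 := Finsupp.ext h
    have := congrArg e.repr.symm h0
    simpa using this
  -- representation as a scalar multiple of a sum of basis vectors
  have hxI : ∀ (x : A) (γ : F) (I : Finset (Fin n)),
      (∀ k, e.repr x k ≠ 0 → e.repr x k = γ) → (∀ k, e.repr x k ≠ 0 ↔ k ∈ I) →
      x = γ • ∑ i ∈ I, e i := by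
    intro x γ I hval hmem
    conv_lhs => rw [← e.sum_repr x]
    rw [Finset.smul_sum]
    rw [← Finset.sum_subset (Finset.subset_univ I)
      (fun i _ hi => by
        have : e.repr x i = 0 := by
          by_contra h; exact hi ((hmem i).mp h)
        rw [this, zero_smul])]
    refine Finset.sum_congr rfl fun i hi => ?_
    rw [hval i ((hmem i).mpr hi)]
  -- structure of square-zero elements (with nonempty support)
  have hsq : ∀ z : A, z ≠ 0 → mul z z = 0 →
      ∃ (c : F) (I : Finset (Fin n)), I.Nonempty ∧ (I.card : F) = 1 - 1 / (2 * α) ∧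
        z = c • ∑ i ∈ I, e i := by
    intro z hz hzz
    have hck : ∀ k, e.repr z k * (2*α*(∑ j, e.repr z j) + (1-2*α) * e.repr z k)
        = 0 * e.repr z k := by
      intro k
      rw [← coeff z k, hzz]
      simp
    obtain ⟨γ, hγI, hval⟩ := stmt_10_aux α 0 h2α (fun i => e.repr z i) hck
    obtain ⟨k₀, hk₀⟩ := hex z hz
    have hγ0 : γ ≠ 0 := fun h => hk₀ (by rw [hval k₀ hk₀, h])
    set I := Finset.univ.filter (fun i => e.repr z i ≠ 0) with hI
    have hD : 1 - 2*α + 2*α*(I.card : F) = 0 := by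
      rcases mul_eq_zero.mp hγI with h | h
      · exact absurd h hγ0
      · exact h
    have hcardF : (I.card : F) = 1 - 1/(2*α) := by
      field_simp
      linear_combination hD
    refine ⟨γ, I, ⟨k₀, by simp [hI, hk₀]⟩, hcardF,
      hxI z γ I hval (fun k => by simp [hI])⟩
  refine ⟨?_, ?_, ?_⟩
  · -- idempotents
    intro x hx hxx
    have hck : ∀ k, e.repr x k * (2*α*(∑ j, e.repr x j) + (1-2*α) * e.repr x k)
        = 1 * e.repr x k := by
      intro k
      rw [← coeff x k, hxx, one_mul]
    obtain ⟨γ, hγI, hval⟩ := stmt_10_aux α 1 h2α (fun i => e.repr x i) hck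
    obtain ⟨k₀, hk₀⟩ := hex x hx
    have hγ0 : γ ≠ 0 := fun h => hk₀ (by rw [hval k₀ hk₀, h])
    set I := Finset.univ.filter (fun i => e.repr x i ≠ 0) with hI
    have hD : (1 - 2*α + 2*α*(I.card : F)) ≠ 0 := by
      intro h
      rw [hI] at h
      rw [h, mul_zero] at hγI
      exact one_ne_zero hγI.symm
    refine ⟨I, ⟨k₀, by simp [hI, hk₀]⟩, ?_, ?_⟩
    · intro hcF
      apply hD
      rw [hcF]
      field_simp
      ring
    · have hγeq : γ = (1 - 2*α + 2*α*(I.card : F))⁻¹ :=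
        eq_inv_of_mul_eq_one_left (by rw [hI] at hγI ⊢; linear_combination hγI)
      have := hxI x γ I hval (fun k => by simp [hI])
      rw [hγeq] at this
      convert this using 3 <;> ring
  · -- existence of square-zero elements
    constructor
    · rintro ⟨z, hz, hzz⟩
      obtain ⟨c, I, hIne, hcard, -⟩ := hsq z hz hzz
      exact ⟨I.card, hIne.card_pos, le_trans (Finset.card_le_univ I) (by simp), hcard⟩
    · rintro ⟨k, hk1, hkn, hkF⟩
      obtain ⟨I, -, hIcard⟩ := Finset.exists_subset_card_eq (s := (Finset.univ : Finset (Fin n))) (n := k) (by simpa using hkn)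
      have hrep : ∀ j, e.repr (∑ i ∈ I, e i) j = if j ∈ I then 1 else 0 := by
        intro j
        rw [map_sum]
        simp [Module.Basis.repr_self, Finsupp.single_apply, Finset.sum_ite_eq']
      have hS : ∑ j, e.repr (∑ i ∈ I, e i) j = (k : F) := by
        simp only [hrep]
        rw [Finset.sum_ite_mem, Finset.univ_inter, Finset.sum_const, hIcard]
        simp
      refine ⟨∑ i ∈ I, e i, ?_, ?_⟩
      · obtain ⟨i₀, hi₀⟩ := Finset.card_pos.mp (by omega : 0 < I.card)
        intro h0
        have h1 := hrep i₀
        rw [h0, if_pos hi₀] at h1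
        simp at h1
      · rw [key]
        apply Finset.sum_eq_zero
        intro i _
        rw [hS, hrep i]
        by_cases hi : i ∈ I
        · rw [if_pos hi]
          have h2k : 2*α*(k : F) + (1-2*α) * 1 = 0 := by
            rw [hkF]
            field_simp
            ring
          rw [h2k, mul_zero, zero_smul]
        · rw [if_neg hi, zero_mul, zero_smul]
  · -- structure of square-zero elements
    intro z hz hzz
    obtain ⟨c, I, -, hcard, hrep⟩ := hsq z hz hzz
    exact ⟨c, I, hcard, hrep⟩
end

section
/- Let F be a field of characteristic zero, n ≥ 2, and let E^n(F) be the commutative algebra spanned by γ_0, ..., γ_n subject to Σγ_i = 0, γ_i*γ_i = γ_i, and γ_i*γ_j = −(γ_i+γ_j)/(n−1) for i ≠ j (any n of the γ_i form a basis). Then the associator satisfies [x,y,z] := (x*y)*z − x*(y*z) = (τ(y,z)x − τ(x,y)z)/(n−1) for all x, y, z, where τ(x,y) = tr(L(x)L(y)) is the Killing form. -/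
private lemma sum_ite_one' {F : Type*} [Field F] {N : ℕ} (m : Fin N) (a b : F) :
    ∑ k : Fin N, (if k = m then a else b) = (N : F) * b + (a - b) := by
  have h : ∀ k : Fin N, (if k = m then a else b) = b + (if k = m then a - b else 0) := by
    intro k; split_ifs <;> ring
  rw [Finset.sum_congr rfl fun k _ => h k, Finset.sum_add_distrib,
    Finset.sum_ite_eq' Finset.univ m (fun _ => a - b), if_pos (Finset.mem_univ m),
    Finset.sum_const, Finset.card_univ, Fintype.card_fin, nsmul_eq_mul]

private lemma sum_ite_two' {F : Type*} [Field F] {N : ℕ} (p q : Fin N) (hpq : p ≠ q)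
    (a1 a2 b : F) :
    ∑ k : Fin N, (if k = q then a2 else if k = p then a1 else b)
      = (N : F) * b + (a2 - b) + (a1 - b) := by
  have h : ∀ k : Fin N, (if k = q then a2 else if k = p then a1 else b)
      = b + (if k = q then a2 - b else 0) + (if k = p then a1 - b else 0) := by
    intro k
    rcases eq_or_ne k q with rfl | hq
    · rw [if_pos rfl, if_pos rfl, if_neg (fun h' : k = p => hpq h'.symm), add_zero]
      ring
    · rw [if_neg hq, if_neg hq]
      split_ifs <;> ring
  rw [Finset.sum_congr rfl fun k _ => h k, Finset.sum_add_distrib, Finset.sum_add_distrib,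
    Finset.sum_ite_eq' Finset.univ q (fun _ => a2 - b), if_pos (Finset.mem_univ q),
    Finset.sum_ite_eq' Finset.univ p (fun _ => a1 - b), if_pos (Finset.mem_univ p),
    Finset.sum_const, Finset.card_univ, Fintype.card_fin, nsmul_eq_mul]

set_option maxHeartbeats 2000000 in
/-- The associator of the simplicial algebra E^n(F) satisfies
[x,y,z] = (τ(y,z)x − τ(x,y)z)/(n−1). -/
theorem stmt_12 {F A : Type*} [Field F] [CharZero F] [AddCommGroup A] [Module F A]
    [FiniteDimensional F A]
    (n : ℕ) (hn : 2 ≤ n) (hdim : Module.finrank F A = n)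
    (mul : A →ₗ[F] A →ₗ[F] A)
    (hcomm : ∀ x y : A, mul x y = mul y x)
    (γ : Fin (n + 1) → A)
    (hsum : ∑ i, γ i = 0)
    (hidem : ∀ i, mul (γ i) (γ i) = γ i)
    (hoff : ∀ i j, i ≠ j →
      mul (γ i) (γ j) = (-1 / ((n : F) - 1)) • (γ i + γ j))
    (hspan : Submodule.span F (Set.range γ) = ⊤) :
    ∀ x y z : A, mul (mul x y) z - mul x (mul y z) =
      ((n : F) - 1)⁻¹ •
        ((LinearMap.trace F A (mul y ∘ₗ mul z)) • x -
         (LinearMap.trace F A (mul x ∘ₗ mul y)) • z) := by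
  have hn1 : ((n : F) - 1) ≠ 0 :=
    sub_ne_zero.mpr (by exact_mod_cast (by omega : n ≠ 1))
  obtain ⟨d, hd0, hd⟩ : ∃ d : F, d ≠ 0 ∧ (n : F) = d + 1 := ⟨(n : F) - 1, hn1, by ring⟩
  have mulγ : ∀ i j, mul (γ i) (γ j)
      = if i = j then γ i else (-1 / ((n : F) - 1)) • (γ i + γ j) := by
    intro i j
    rcases eq_or_ne i j with rfl | h
    · rw [if_pos rfl]; exact hidem i
    · rw [if_neg h]; exact hoff i j h
  have hγ0 : γ 0 = -∑ k : Fin n, γ k.succ := by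
    have h := hsum
    rw [Fin.sum_univ_succ] at h
    exact eq_neg_of_add_eq_zero_left h
  have htop : ⊤ ≤ Submodule.span F (Set.range fun k : Fin n => γ k.succ) := by
    rw [← hspan]
    refine Submodule.span_le.mpr ?_
    rintro _ ⟨j, rfl⟩
    rcases Fin.eq_zero_or_eq_succ j with rfl | ⟨m, rfl⟩
    · rw [hγ0]
      exact neg_mem (Submodule.sum_mem _ fun k _ => Submodule.subset_span ⟨k, rfl⟩)
    · exact Submodule.subset_span ⟨m, rfl⟩
  set b : Module.Basis (Fin n) F A :=
    basisOfTopLeSpanOfCardEqFinrank (fun k : Fin n => γ k.succ) htop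
      (by rw [Fintype.card_fin, hdim]) with hbdef
  have hb : ∀ k, b k = γ k.succ := fun k => by
    rw [hbdef, coe_basisOfTopLeSpanOfCardEqFinrank]
  have hrepr : ∀ (j : Fin (n + 1)) (k : Fin n),
      b.repr (γ j) k = if j = 0 then -1 else if j = k.succ then 1 else 0 := by
    intro j k
    have hself : ∀ l : Fin n, b.repr (γ l.succ) = Finsupp.single l 1 := fun l => by
      rw [← hb l]; exact b.repr_self l
    rcases Fin.eq_zero_or_eq_succ j with rfl | ⟨m, rfl⟩
    · rw [if_pos rfl, hγ0, map_neg, map_sum]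
      simp only [hself]
      rw [Finsupp.neg_apply, Finsupp.finset_sum_apply]
      simp [Finsupp.single_apply]
    · rw [if_neg (Fin.succ_ne_zero m), hself m]
      simp [Finsupp.single_apply, Fin.succ_inj]
  have htr : ∀ f : A →ₗ[F] A,
      LinearMap.trace F A f = ∑ k : Fin n, b.repr (f (γ k.succ)) k := by
    intro f
    rw [LinearMap.trace_eq_matrix_trace F b f, Matrix.trace]
    refine Finset.sum_congr rfl fun k _ => ?_
    rw [Matrix.diag_apply, LinearMap.toMatrix_apply, hb]
  have htau : ∀ i j, LinearMap.trace F A (mul (γ i) ∘ₗ mul (γ j))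
      = (if i = j then (n : F) else -1) / ((n : F) - 1) := by
    intro i j
    rw [htr]
    simp only [LinearMap.comp_apply]
    rcases eq_or_ne i j with rfl | hij
    · rw [if_pos rfl]
      rcases Fin.eq_zero_or_eq_succ i with rfl | ⟨m, rfl⟩
      · have hk : ∀ k : Fin n,
            b.repr (mul (γ 0) (mul (γ 0) (γ k.succ))) k = 1 / ((n : F) - 1) := by
          intro k
          have h0 : (0 : Fin (n + 1)) ≠ k.succ := (Fin.succ_ne_zero k).symm
          simp [mulγ, hrepr, h0, Fin.succ_ne_zero k]
          try ring
        rw [Finset.sum_congr rfl fun k _ => hk k, Finset.sum_const, Finset.card_univ,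
          Fintype.card_fin, nsmul_eq_mul]
        rw [hd, show (d + 1 : F) - 1 = d from by ring]
        field_simp
        try ring
      · have hk : ∀ k : Fin n, b.repr (mul (γ m.succ) (mul (γ m.succ) (γ k.succ))) k
            = if k = m then 1 else 1 / (((n : F) - 1) * ((n : F) - 1)) := by
          intro k
          rcases eq_or_ne k m with rfl | hkm
          · rw [if_pos rfl]
            simp [mulγ, hrepr, Fin.succ_ne_zero k]
          · rw [if_neg hkm]
            have hne : m.succ ≠ k.succ := fun h => hkm (Fin.succ_inj.mp h).symm
            simp [mulγ, hrepr, hne, Ne.symm hne, Fin.succ_ne_zero m, Fin.succ_ne_zero k]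
            try (field_simp; try ring)
        rw [Finset.sum_congr rfl fun k _ => hk k, sum_ite_one']
        rw [hd, show (d + 1 : F) - 1 = d from by ring]
        field_simp
        try ring
    · rw [if_neg hij]
      rcases Fin.eq_zero_or_eq_succ i with rfl | ⟨p, rfl⟩
      · rcases Fin.eq_zero_or_eq_succ j with rfl | ⟨q, rfl⟩
        · exact absurd rfl hij
        · have hk : ∀ k : Fin n, b.repr (mul (γ 0) (mul (γ q.succ) (γ k.succ))) k
              = if k = q then 0 else -(1 / (((n : F) - 1) * ((n : F) - 1))) := by
            intro k
            have h0k : (0 : Fin (n + 1)) ≠ k.succ := (Fin.succ_ne_zero k).symm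
            have h0q : (0 : Fin (n + 1)) ≠ q.succ := (Fin.succ_ne_zero q).symm
            rcases eq_or_ne k q with rfl | hkq
            · rw [if_pos rfl]
              simp [mulγ, hrepr, h0k, Fin.succ_ne_zero k]
              try ring
            · rw [if_neg hkq]
              have hqk : q.succ ≠ k.succ := fun h => hkq (Fin.succ_inj.mp h).symm
              simp [mulγ, hrepr, h0k, h0q, hqk, Ne.symm hqk,
                Fin.succ_ne_zero q, Fin.succ_ne_zero k]
              try (field_simp; try ring)
          rw [Finset.sum_congr rfl fun k _ => hk k, sum_ite_one']
          rw [hd, show (d + 1 : F) - 1 = d from by ring]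
          field_simp
          try ring
      · rcases Fin.eq_zero_or_eq_succ j with rfl | ⟨q, rfl⟩
        · have hk : ∀ k : Fin n, b.repr (mul (γ p.succ) (mul (γ 0) (γ k.succ))) k
              = if k = p then -1 / ((n : F) - 1) else 0 := by
            intro k
            have h0k : (0 : Fin (n + 1)) ≠ k.succ := (Fin.succ_ne_zero k).symm
            rcases eq_or_ne k p with rfl | hkp
            · rw [if_pos rfl]
              simp [mulγ, hrepr, h0k, Fin.succ_ne_zero k]
              try ring
            · rw [if_neg hkp]
              have hpk : p.succ ≠ k.succ := fun h => hkp (Fin.succ_inj.mp h).symm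
              simp [mulγ, hrepr, h0k, hpk, Ne.symm hpk,
                Fin.succ_ne_zero p, Fin.succ_ne_zero k]
              try ring
          rw [Finset.sum_congr rfl fun k _ => hk k, sum_ite_one']
          rw [hd, show (d + 1 : F) - 1 = d from by ring]
          field_simp
          try ring
        · have hpq : p ≠ q := fun h => hij (by rw [h])
          have hpqs : p.succ ≠ q.succ := fun h => hpq (Fin.succ_inj.mp h)
          have hk : ∀ k : Fin n, b.repr (mul (γ p.succ) (mul (γ q.succ) (γ k.succ))) k
              = if k = q then -1 / ((n : F) - 1)
                else if k = p then
                  1 / (((n : F) - 1) * ((n : F) - 1)) + -1 / ((n : F) - 1)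
                else 1 / (((n : F) - 1) * ((n : F) - 1)) := by
            intro k
            rcases eq_or_ne k q with rfl | hkq
            · rw [if_pos rfl]
              have hps : p.succ ≠ k.succ := fun h => hpq (Fin.succ_inj.mp h)
              simp [mulγ, hrepr, hpqs, hps, Ne.symm hps,
                Fin.succ_ne_zero p, Fin.succ_ne_zero k]
              try ring
            · rw [if_neg hkq]
              have hqk : q.succ ≠ k.succ := fun h => hkq (Fin.succ_inj.mp h).symm
              rcases eq_or_ne k p with rfl | hkp
              · rw [if_pos rfl]
                simp [mulγ, hrepr, hpqs, hqk, Ne.symm hqk,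
                  Fin.succ_ne_zero q, Fin.succ_ne_zero k]
                try (field_simp; try ring)
              · rw [if_neg hkp]
                have hpk : p.succ ≠ k.succ := fun h => hkp (Fin.succ_inj.mp h).symm
                simp [mulγ, hrepr, hpqs, hqk, Ne.symm hqk, hpk, Ne.symm hpk,
                  Fin.succ_ne_zero q, Fin.succ_ne_zero p, Fin.succ_ne_zero k]
                try (field_simp; try ring)
          rw [Finset.sum_congr rfl fun k _ => hk k, sum_ite_two' p q hpq]
          rw [hd, show (d + 1 : F) - 1 = d from by ring]
          field_simp
          try ring
          try simp [mul_inv_cancel₀ (pow_ne_zero 7 hd0), ← mul_pow, mul_inv_cancel₀ hd0]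
  have key : ∀ a bb cc : Fin (n + 1),
      mul (mul (γ a) (γ bb)) (γ cc) - mul (γ a) (mul (γ bb) (γ cc))
        = ((n : F) - 1)⁻¹ •
          ((LinearMap.trace F A (mul (γ bb) ∘ₗ mul (γ cc))) • γ a -
           (LinearMap.trace F A (mul (γ a) ∘ₗ mul (γ bb))) • γ cc) := by
    intro a bb cc
    rw [htau, htau]
    rcases eq_or_ne a bb with rfl | hab
    · rcases eq_or_ne a cc with rfl | hac
      · simp [mulγ]
      · rw [if_neg hac, if_pos rfl]
        simp [mulγ, hac, Ne.symm hac, map_add, map_smul,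
          LinearMap.add_apply, LinearMap.smul_apply]
        try match_scalars <;> ((try rw [hd]); field_simp; try ring)
    · rcases eq_or_ne bb cc with rfl | hbc
      · rw [if_pos rfl, if_neg hab]
        simp [mulγ, hab, Ne.symm hab, map_add, map_smul,
          LinearMap.add_apply, LinearMap.smul_apply]
        try match_scalars <;> ((try rw [hd]); field_simp; try ring)
      · rcases eq_or_ne a cc with rfl | hac
        · rw [if_neg hbc, if_neg hab]
          simp [mulγ, hab, hbc, Ne.symm hab, Ne.symm hbc, map_add, map_smul,
            LinearMap.add_apply, LinearMap.smul_apply]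
          try match_scalars <;> ((try rw [hd]); field_simp; try ring)
        · rw [if_neg hbc, if_neg hab]
          simp [mulγ, hab, hbc, hac, Ne.symm hab, Ne.symm hbc, Ne.symm hac,
            map_add, map_smul, LinearMap.add_apply, LinearMap.smul_apply]
          try match_scalars <;> ((try rw [hd]); field_simp; try ring)
  have hmem : ∀ w : A, w ∈ Submodule.span F (Set.range γ) := fun w => by
    rw [hspan]; exact Submodule.mem_top
  have key1 : ∀ (a bb : Fin (n + 1)) (z : A),
      mul (mul (γ a) (γ bb)) z - mul (γ a) (mul (γ bb) z)
        = ((n : F) - 1)⁻¹ •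
          ((LinearMap.trace F A (mul (γ bb) ∘ₗ mul z)) • γ a -
           (LinearMap.trace F A (mul (γ a) ∘ₗ mul (γ bb))) • z) := by
    intro a bb z
    have hz := hmem z
    induction hz using Submodule.span_induction with
    | mem w hw => obtain ⟨cc, rfl⟩ := hw; exact key a bb cc
    | zero => simp
    | add u v hu hv ihu ihv =>
        simp only [map_add, LinearMap.comp_add, LinearMap.add_apply]
        linear_combination (norm := module) ihu + ihv
    | smul t u hu ihu =>
        simp only [map_smul, LinearMap.comp_smul, LinearMap.smul_apply, smul_eq_mul]
        linear_combination (norm := module) t • ihu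
  have key2 : ∀ (a : Fin (n + 1)) (y z : A),
      mul (mul (γ a) y) z - mul (γ a) (mul y z)
        = ((n : F) - 1)⁻¹ •
          ((LinearMap.trace F A (mul y ∘ₗ mul z)) • γ a -
           (LinearMap.trace F A (mul (γ a) ∘ₗ mul y)) • z) := by
    intro a y z
    have hy := hmem y
    induction hy using Submodule.span_induction with
    | mem w hw => obtain ⟨bb, rfl⟩ := hw; exact key1 a bb z
    | zero => simp
    | add u v hu hv ihu ihv =>
        simp only [map_add, LinearMap.comp_add, LinearMap.add_comp,
          LinearMap.add_apply]
        linear_combination (norm := module) ihu + ihv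
    | smul t u hu ihu =>
        simp only [map_smul, LinearMap.comp_smul, LinearMap.smul_comp,
          LinearMap.smul_apply, smul_eq_mul]
        linear_combination (norm := module) t • ihu
  intro x
  have hx := hmem x
  induction hx using Submodule.span_induction with
  | mem w hw => obtain ⟨a, rfl⟩ := hw; exact key2 a
  | zero => intro y z; simp
  | add u v hu hv ihu ihv =>
      intro y z
      simp only [map_add, LinearMap.add_comp, LinearMap.add_apply]
      linear_combination (norm := module) ihu y z + ihv y z
  | smul t u hu ihu =>
      intro y z
      simp only [map_smul, LinearMap.smul_comp, LinearMap.smul_apply, smul_eq_mul]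
      linear_combination (norm := module) t • ihu y z
end

section
/- Let (A, *, h) be a metrized commutative algebra over a field of characteristic zero with n = dim A. The following are equivalent: (1) the associator satisfies [x,y,z] = −ric(y,z)x/(n−1) + ric(x,y)z/(n−1) for all x,y,z, where ric is the Ricci form; (2) there exists a symmetric bilinear form c with [x,y,z] = c(y,z)x − c(x,y)z for all x,y,z; (3) there exists a symmetric bilinear form c such that the c-unitalization of A is associative. Moreover, under these conditions the Ricci form is invariant. -/
/-- Projective associativity: the associator identity with the Ricci form, existence of
a symmetric bilinear form c with [x,y,z] = c(y,z)x − c(x,y)z, and associativity of some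
c-unitalization are equivalent; under these conditions the Ricci form is invariant. -/
theorem stmt_14 {F A : Type*} [Field F] [CharZero F] [AddCommGroup A] [Module F A]
    [FiniteDimensional F A]
    (hdim : 1 < Module.finrank F A)
    (mul : A →ₗ[F] A →ₗ[F] A)
    (hcomm : ∀ x y : A, mul x y = mul y x)
    (h : A →ₗ[F] A →ₗ[F] F)
    (hsymm : ∀ x y : A, h x y = h y x)
    (hnd : ∀ x : A, (∀ y : A, h x y = 0) → x = 0)
    (hinv : ∀ x y z : A, h (mul x y) z = h x (mul y z))
    (ric : A → A → F)
    (hricdef : ∀ x y : A, ric x y =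
      LinearMap.trace F A (mul (mul x y)) - LinearMap.trace F A (mul x ∘ₗ mul y)) :
    ((∀ x y z : A, mul (mul x y) z - mul x (mul y z) =
        (-(ric y z) / ((Module.finrank F A : F) - 1)) • x +
        (ric x y / ((Module.finrank F A : F) - 1)) • z) ↔
      (∃ c : A → A → F, (∀ x y : A, c x y = c y x) ∧
        ∀ x y z : A, mul (mul x y) z - mul x (mul y z) = c y z • x - c x y • z)) ∧
    ((∃ c : A → A → F, (∀ x y : A, c x y = c y x) ∧
        ∀ x y z : A, mul (mul x y) z - mul x (mul y z) = c y z • x - c x y • z) ↔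
      (∃ c : A → A → F, (∀ x y : A, c x y = c y x) ∧
        ∃ m : A × F → A × F → A × F,
          (∀ (x y : A) (a b : F),
            m (x, a) (y, b) = (mul x y + a • y + b • x, a * b + c x y)) ∧
          ∀ p q s : A × F, m (m p q) s = m p (m q s))) ∧
    ((∀ x y z : A, mul (mul x y) z - mul x (mul y z) =
        (-(ric y z) / ((Module.finrank F A : F) - 1)) • x +
        (ric x y / ((Module.finrank F A : F) - 1)) • z) →
      ∀ x y z : A, ric (mul x y) z = ric x (mul y z)) := by
  set n : F := (Module.finrank F A : F) with hn
  have hsub : n - 1 ≠ 0 := by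
    rw [sub_ne_zero, hn]
    intro hcon
    rw [show (1 : F) = ((1 : ℕ) : F) by norm_num] at hcon
    have := Nat.cast_injective (R := F) hcon
    omega
  -- a pair where h is nonzero
  obtain ⟨x0, w0, hx0w0⟩ : ∃ x0 w0 : A, h x0 w0 ≠ 0 := by
    have hnt : Nontrivial A := Module.nontrivial_of_finrank_pos (R := F) (by omega)
    obtain ⟨x0, hx0⟩ := exists_ne (0 : A)
    by_contra hcon
    push_neg at hcon
    exact hx0 (hnd x0 (hcon x0))
  -- any c satisfying (2) is a multiple of h
  have master : ∀ c : A → A → F, (∀ x y : A, c x y = c y x) →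
      (∀ x y z : A, mul (mul x y) z - mul x (mul y z) = c y z • x - c x y • z) →
      ∃ lam : F, ∀ x y : A, c x y = lam * h x y := by
    intro c csym H2
    have E1 : ∀ x y z w : A,
        h (mul x y) (mul z w) - h (mul y z) (mul x w) = c y z * h x w - c x y * h z w := by
      intro x y z w
      have e := congrArg (fun v => h v w) (H2 x y z)
      simp only [map_sub, LinearMap.sub_apply, map_smul, LinearMap.smul_apply,
        smul_eq_mul] at e
      rw [hinv (mul x y) z w] at e
      rw [hcomm x (mul y z), hinv (mul y z) x w] at e
      exact e
    have key : ∀ x y z w : A, c y z * h x w = c x w * h y z := by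
      intro x y z w
      have e1 := E1 x y z w
      have e2 := E1 y x w z
      rw [hcomm y x, hcomm w z, csym y x, hsymm w z] at e2
      have e3 : h (mul y z) (mul x w) = h (mul x w) (mul y z) := hsymm _ _
      linear_combination e2 - e1 - e3
    refine ⟨c x0 w0 / h x0 w0, fun y z => ?_⟩
    have hk := key x0 y z w0
    rw [div_mul_eq_mul_div, eq_div_iff hx0w0]
    linear_combination hk
  -- trace of a rank-one operator
  have tr1 : ∀ x y : A,
      LinearMap.trace F A ((LinearMap.toSpanSingleton F A x) ∘ₗ (h y)) = h y x := by
    intro x y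
    rw [LinearMap.trace_comp_comm']
    have hcomp : (h y) ∘ₗ (LinearMap.toSpanSingleton F A x) = (h y x) • LinearMap.id := by
      ext
      simp [LinearMap.toSpanSingleton_apply, smul_eq_mul, mul_comm]
    rw [hcomp, map_smul, LinearMap.trace_id, Module.finrank_self]
    simp
  -- under (2), ric = (1 - n) * c
  have ric_c : ∀ c : A → A → F, ∀ lam : F, (∀ x y : A, c x y = lam * h x y) →
      (∀ x y z : A, mul (mul x y) z - mul x (mul y z) = c y z • x - c x y • z) →
      ∀ x y : A, ric x y = (1 - n) * c x y := by
    intro c lam hc H2 x y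
    have hmap : mul (mul x y) - mul x ∘ₗ mul y =
        lam • ((LinearMap.toSpanSingleton F A x) ∘ₗ (h y)) - (c x y) • LinearMap.id := by
      ext z
      simp only [LinearMap.sub_apply, LinearMap.coe_comp, Function.comp_apply,
        LinearMap.smul_apply, LinearMap.toSpanSingleton_apply, LinearMap.id_coe, id_eq]
      rw [H2 x y z, hc y z]
      simp [smul_smul]
    have : ric x y = LinearMap.trace F A (mul (mul x y) - mul x ∘ₗ mul y) := by
      rw [hricdef, map_sub]
    rw [this, hmap, map_sub, map_smul, map_smul, tr1, LinearMap.trace_id,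
      smul_eq_mul, smul_eq_mul, hsymm y x, ← hc x y]
    ring
  -- symmetry of ric
  have ric_symm : ∀ x y : A, ric x y = ric y x := by
    intro x y
    rw [hricdef, hricdef, hcomm x y]
    congr 1
    exact LinearMap.trace_mul_comm _ (mul x) (mul y)
  refine ⟨?_, ?_, ?_⟩
  · -- (1) ↔ (2)
    constructor
    · intro H1
      refine ⟨fun x y => -(ric x y) / (n - 1), fun x y => by show -(ric x y) / (n-1) = -(ric y x) / (n-1); rw [ric_symm x y], fun x y z => ?_⟩
      rw [H1 x y z]
      beta_reduce
      match_scalars <;> ring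
    · rintro ⟨c, csym, H2⟩
      obtain ⟨lam, hc⟩ := master c csym H2
      have hric := ric_c c lam hc H2
      intro x y z
      rw [H2 x y z]
      have h1 : -(ric y z) / (n - 1) = c y z := by
        rw [hric y z]; field_simp; ring
      have h2 : ric x y / (n - 1) = -(c x y) := by
        rw [hric x y]; field_simp; ring
      rw [h1, h2, neg_smul, ← sub_eq_add_neg]
  · -- (2) ↔ (3)
    constructor
    · rintro ⟨c, csym, H2⟩
      obtain ⟨lam, hc⟩ := master c csym H2
      refine ⟨c, csym,
        fun p q => (mul p.1 q.1 + p.2 • q.1 + q.2 • p.1, p.2 * q.2 + c p.1 q.1),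
        fun x y a b => rfl, ?_⟩
      rintro ⟨x, a⟩ ⟨y, b⟩ ⟨z, d⟩
      refine Prod.ext ?_ ?_
      · simp only [map_add, map_smul, LinearMap.add_apply, LinearMap.smul_apply]
        have e := H2 x y z
        linear_combination (norm := module) e
      · simp only [hc, map_add, map_smul, LinearMap.add_apply, LinearMap.smul_apply,
          smul_eq_mul]
        rw [hinv x y z]
        ring
    · rintro ⟨c, csym, m, hm, hassoc⟩
      refine ⟨c, csym, fun x y z => ?_⟩
      have e := hassoc (x, 0) (y, 0) (z, 0)
      simp only [hm, zero_smul, add_zero, zero_add, mul_zero, zero_mul, smul_zero,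
        Prod.mk.injEq] at e
      obtain ⟨e1, _⟩ := e
      linear_combination (norm := module) e1
  · -- (1) → ric invariant
    intro H1 x y z
    have csym : ∀ u v : A, -(ric u v) / (n - 1) = -(ric v u) / (n - 1) := by
      intro u v; rw [ric_symm u v]
    have H2 : ∀ x y z : A, mul (mul x y) z - mul x (mul y z) =
        (-(ric y z) / (n - 1)) • x - (-(ric x y) / (n - 1)) • z := by
      intro x y z
      rw [H1 x y z]
      match_scalars <;> ring
    obtain ⟨lam, hc⟩ := master (fun u v => -(ric u v) / (n - 1)) csym H2
    have hric2 : ∀ u v : A, ric u v = -((n - 1) * (lam * h u v)) := by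
      intro u v
      have hcv : -(ric u v) / (n - 1) = lam * h u v := hc u v
      rw [div_eq_iff hsub] at hcv
      linear_combination -hcv
    rw [hric2, hric2, hinv x y z]
end

section
/- Let (A, *, h) be a metrized commutative algebra over a field of characteristic zero and let (Â, ·, ĥ) be its unitalization: Â = A ⊕ F, (x,a)·(y,b) = (x*y + ay + bx, ab + h(x,y)), ĥ((x,a),(y,b)) = h(x,y) + ab. Then the Killing form of Â is equal to (2+κ)ĥ for some κ if and only if A is exact and its Killing form equals κ·h with κ = n − 1 (n = dim A); in that case the Killing form of Â equals (n+1)ĥ and the Ricci form of Â vanishes. -/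
open LinearMap TensorProduct

section aux
variable {F A : Type*} [Field F] [AddCommGroup A] [Module F A] [FiniteDimensional F A]

lemma aux_traceF (f : F →ₗ[F] F) : LinearMap.trace F F f = f 1 := by
  have hf : f = (f 1) • LinearMap.id := by
    ext
    simp only [LinearMap.smul_apply, id_apply, smul_eq_mul, mul_one]
  rw [hf, map_smul, LinearMap.trace_id, Module.finrank_self]
  simp

lemma aux_trace_block (T : (A × F) →ₗ[F] (A × F)) :
    LinearMap.trace F (A × F) T =
      LinearMap.trace F A (fst F A F ∘ₗ T ∘ₗ inl F A F) +
      (snd F A F ∘ₗ T ∘ₗ inr F A F) 1 := by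
  have hT : T = inl F A F ∘ₗ (fst F A F ∘ₗ T ∘ₗ inl F A F) ∘ₗ fst F A F
      + inl F A F ∘ₗ (fst F A F ∘ₗ T ∘ₗ inr F A F) ∘ₗ snd F A F
      + inr F A F ∘ₗ (snd F A F ∘ₗ T ∘ₗ inl F A F) ∘ₗ fst F A F
      + inr F A F ∘ₗ (snd F A F ∘ₗ T ∘ₗ inr F A F) ∘ₗ snd F A F := by
    apply LinearMap.ext
    rintro ⟨z, c⟩
    have hz : ((z, c) : A × F) = (z, 0) + (0, c) := by simp
    simp only [LinearMap.add_apply, comp_apply, inl_apply, inr_apply, fst_apply, snd_apply]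
    rw [hz, map_add]
    ext <;> simp
  conv_lhs => rw [hT]
  rw [map_add, map_add, map_add]
  rw [trace_comp_comm' ((fst F A F ∘ₗ T ∘ₗ inl F A F) ∘ₗ fst F A F) (inl F A F)]
  rw [trace_comp_comm' ((fst F A F ∘ₗ T ∘ₗ inr F A F) ∘ₗ snd F A F) (inl F A F)]
  rw [trace_comp_comm' ((snd F A F ∘ₗ T ∘ₗ inl F A F) ∘ₗ fst F A F) (inr F A F)]
  rw [trace_comp_comm' ((snd F A F ∘ₗ T ∘ₗ inr F A F) ∘ₗ snd F A F) (inr F A F)]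
  simp only [comp_assoc, fst_comp_inl, snd_comp_inl, fst_comp_inr, snd_comp_inr,
    comp_id, comp_zero, map_zero, add_zero, zero_add]
  rw [aux_traceF]

lemma aux_tr (mul : A →ₗ[F] A →ₗ[F] A) (h : A →ₗ[F] A →ₗ[F] F)
    (mhat : (A × F) →ₗ[F] (A × F) →ₗ[F] (A × F))
    (hmhat : ∀ (x y : A) (a b : F),
      mhat (x, a) (y, b) = (mul x y + a • y + b • x, a * b + h x y))
    (w : A) (c : F) :
    LinearMap.trace F (A × F) (mhat (w, c)) =
      LinearMap.trace F A (mul w) + ((Module.finrank F A : F) + 1) * c := by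
  rw [aux_trace_block]
  have h1 : fst F A F ∘ₗ mhat (w, c) ∘ₗ inl F A F = mul w + c • LinearMap.id := by
    ext z
    simp [hmhat]
  have h2 : (snd F A F ∘ₗ mhat (w, c) ∘ₗ inr F A F) 1 = c := by
    simp [hmhat]
  rw [h1, h2, map_add, map_smul, LinearMap.trace_id]
  simp only [smul_eq_mul]
  ring

lemma aux_tau (mul : A →ₗ[F] A →ₗ[F] A) (h : A →ₗ[F] A →ₗ[F] F)
    (mhat : (A × F) →ₗ[F] (A × F) →ₗ[F] (A × F))
    (hmhat : ∀ (x y : A) (a b : F),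
      mhat (x, a) (y, b) = (mul x y + a • y + b • x, a * b + h x y))
    (x y : A) (a b : F) :
    LinearMap.trace F (A × F) (mhat (x, a) ∘ₗ mhat (y, b)) =
      LinearMap.trace F A (mul x ∘ₗ mul y) + b * LinearMap.trace F A (mul x)
        + a * LinearMap.trace F A (mul y)
        + ((Module.finrank F A : F) + 1) * (a * b) + h x y + h y x := by
  rw [aux_trace_block]
  have h1 : fst F A F ∘ₗ (mhat (x, a) ∘ₗ mhat (y, b)) ∘ₗ inl F A F =
      mul x ∘ₗ mul y + b • mul x + a • mul y + (a * b) • LinearMap.id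
        + dualTensorHom F A A (h y ⊗ₜ[F] x) := by
    ext z
    simp only [comp_apply, inl_apply, fst_apply, LinearMap.add_apply, LinearMap.smul_apply, id_apply,
      dualTensorHom_apply]
    rw [hmhat]
    simp only [mul_zero, zero_smul, add_zero, zero_add, smul_eq_mul]
    rw [hmhat]
    simp only [map_add, map_smul]
    rw [mul_comm a b]
    module
  have h2 : (snd F A F ∘ₗ (mhat (x, a) ∘ₗ mhat (y, b)) ∘ₗ inr F A F) 1 =
      a * b + h x y := by
    simp only [comp_apply, inr_apply, snd_apply]
    rw [hmhat]
    simp only [map_zero, zero_smul, one_smul, zero_add, add_zero, mul_one]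
    rw [hmhat]
    simp
  rw [h1, h2, map_add, map_add, map_add, map_add, map_smul, map_smul, map_smul,
    LinearMap.trace_id, trace_eq_contract_apply, contractLeft_apply]
  simp only [smul_eq_mul]
  ring

end aux

/-- The unitalization of a metrized commutative algebra is Killing Einstein (with
constant 2+κ) iff the algebra is exact and Killing Einstein with κ = n−1; in that case
the unitalization has Killing Einstein constant n+1 and vanishing Ricci form. -/
theorem stmt_15 {F A : Type*} [Field F] [CharZero F] [AddCommGroup A] [Module F A]
    [FiniteDimensional F A]
    (hdim : 1 < Module.finrank F A)
    (mul : A →ₗ[F] A →ₗ[F] A)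
    (hcomm : ∀ x y : A, mul x y = mul y x)
    (h : A →ₗ[F] A →ₗ[F] F)
    (hsymm : ∀ x y : A, h x y = h y x)
    (hnd : ∀ x : A, (∀ y : A, h x y = 0) → x = 0)
    (hinv : ∀ x y z : A, h (mul x y) z = h x (mul y z))
    (mhat : (A × F) →ₗ[F] (A × F) →ₗ[F] (A × F))
    (hmhat : ∀ (x y : A) (a b : F),
      mhat (x, a) (y, b) = (mul x y + a • y + b • x, a * b + h x y))
    (hhat : A × F → A × F → F)
    (hhatdef : ∀ p q : A × F, hhat p q = h p.1 q.1 + p.2 * q.2) :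
    (∀ κ : F,
      (∀ p q : A × F,
          LinearMap.trace F (A × F) (mhat p ∘ₗ mhat q) = (2 + κ) * hhat p q) ↔
        ((∀ x : A, LinearMap.trace F A (mul x) = 0) ∧
         (∀ x y : A, LinearMap.trace F A (mul x ∘ₗ mul y) = κ * h x y) ∧
         κ = (Module.finrank F A : F) - 1)) ∧
    (((∀ x : A, LinearMap.trace F A (mul x) = 0) ∧
      (∀ x y : A, LinearMap.trace F A (mul x ∘ₗ mul y) =
        ((Module.finrank F A : F) - 1) * h x y)) →
      (∀ p q : A × F, LinearMap.trace F (A × F) (mhat p ∘ₗ mhat q) =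
        ((Module.finrank F A : F) + 1) * hhat p q) ∧
      (∀ p q : A × F, LinearMap.trace F (A × F) (mhat (mhat p q)) =
        LinearMap.trace F (A × F) (mhat p ∘ₗ mhat q))) := by
  have key : ∀ (x y : A) (a b : F),
      LinearMap.trace F (A × F) (mhat (x, a) ∘ₗ mhat (y, b)) =
        LinearMap.trace F A (mul x ∘ₗ mul y) + b * LinearMap.trace F A (mul x)
          + a * LinearMap.trace F A (mul y)
          + ((Module.finrank F A : F) + 1) * (a * b) + h x y + h y x :=
    aux_tau mul h mhat hmhat
  constructor
  · intro κ
    constructor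
    · intro H
      have hexact : ∀ x : A, LinearMap.trace F A (mul x) = 0 := by
        intro x
        have h1 := H (x, 0) (0, 1)
        rw [key, hhatdef] at h1
        simp only [map_zero, LinearMap.comp_zero, LinearMap.zero_apply] at h1
        simpa using h1
      have hκ : κ = (Module.finrank F A : F) - 1 := by
        have h1 := H (0, 1) (0, 1)
        rw [key, hhatdef] at h1
        simp only [map_zero, LinearMap.comp_zero, LinearMap.zero_apply, LinearMap.zero_comp,
          LinearMap.zero_apply] at h1
        simp only [mul_one, one_mul, add_zero, zero_add] at h1
        linear_combination -h1
      refine ⟨hexact, ?_, hκ⟩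
      intro x y
      have h1 := H (x, 0) (y, 0)
      rw [key, hhatdef] at h1
      simp only [hexact, mul_zero, zero_mul, add_zero] at h1
      rw [hsymm y x] at h1
      rw [hκ] at h1 ⊢
      linear_combination h1
    · rintro ⟨hexact, hein, hκ⟩
      rintro ⟨x, a⟩ ⟨y, b⟩
      rw [key, hhatdef, hein, hexact, hexact, hsymm y x, hκ]
      simp only
      ring
  · rintro ⟨hexact, hein⟩
    constructor
    · rintro ⟨x, a⟩ ⟨y, b⟩
      rw [key, hhatdef, hein, hexact, hexact, hsymm y x]
      simp only
      ring
    · rintro ⟨x, a⟩ ⟨y, b⟩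
      rw [key, hmhat, aux_tr mul h mhat hmhat]
      simp only [hexact, hein]
      rw [hsymm y x]
      ring
end

section
/- A finite-dimensional Killing metrized exact commutative algebra (A, *) over a field has no 1-dimensional ideal on which the Killing form is anisotropic. Consequently it also has no codimension-1 ideal on which the Killing form is anisotropic. -/
open LinearMap Module

lemma aux_deg {F A : Type*} [Field F] [AddCommGroup A] [Module F A]
    [FiniteDimensional F A]
    (mul : A →ₗ[F] A →ₗ[F] A)
    (hexact : ∀ x : A, LinearMap.trace F A (mul x) = 0)
    (e : A) (hm : ∀ x : A, ∃ c : F, c • e = mul e x) :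
    LinearMap.trace F A (mul e ∘ₗ mul e) = 0 := by
  obtain ⟨c, hc⟩ := hm e
  have hsq : mul e ∘ₗ mul e = c • mul e := by
    ext x
    obtain ⟨d, hd⟩ := hm x
    have : mul e (mul e x) = c • (d • e) := by
      rw [← hd, map_smul, ← hc, smul_comm]
    simp only [LinearMap.comp_apply, LinearMap.smul_apply, this, ← hd]
    rw [map_smul, ← hc, smul_comm]
  rw [hsq, map_smul, hexact, smul_zero]

/-- A Killing metrized exact commutative algebra has no 1-dimensional and no
codimension-1 ideal on which the Killing form is anisotropic. -/
theorem stmt_16 {F A : Type*} [Field F] [AddCommGroup A] [Module F A]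
    [FiniteDimensional F A]
    (mul : A →ₗ[F] A →ₗ[F] A)
    (hcomm : ∀ x y : A, mul x y = mul y x)
    (hexact : ∀ x : A, LinearMap.trace F A (mul x) = 0)
    (hτnd : ∀ x : A, (∀ y : A, LinearMap.trace F A (mul x ∘ₗ mul y) = 0) → x = 0)
    (hτinv : ∀ x y z : A, LinearMap.trace F A (mul (mul x y) ∘ₗ mul z)
      = LinearMap.trace F A (mul x ∘ₗ mul (mul y z)))
    (J : Submodule F A)
    (hJ : ∀ x : A, ∀ a ∈ J, mul x a ∈ J)
    (hani : ∀ v ∈ J, v ≠ 0 → LinearMap.trace F A (mul v ∘ₗ mul v) ≠ 0) :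
    Module.finrank F J ≠ 1 ∧ Module.finrank F J + 1 ≠ Module.finrank F A := by
  constructor
  · -- no 1-dimensional anisotropic ideal
    intro h1
    obtain ⟨v, hv0, hv⟩ := finrank_eq_one_iff'.mp h1
    set e : A := (v : A) with he
    have he0 : e ≠ 0 := fun h => hv0 (Subtype.ext h)
    have hm : ∀ x : A, ∃ c : F, c • e = mul e x := by
      intro x
      have hmem : mul e x ∈ J := by rw [hcomm]; exact hJ x e v.2
      obtain ⟨c, hc⟩ := hv ⟨mul e x, hmem⟩
      exact ⟨c, congrArg Subtype.val hc⟩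
    exact hani e v.2 he0 (aux_deg mul hexact e hm)
  · -- no codimension-one anisotropic ideal
    intro h2
    -- the orthogonal complement of J
    set f : A →ₗ[F] (↥J →ₗ[F] F) :=
      { toFun := fun x =>
          ((LinearMap.trace F A) ∘ₗ ((LinearMap.llcomp F A A A (mul x)) ∘ₗ mul)).domRestrict J
        map_add' := by intro x y; ext a; simp [LinearMap.add_comp]
        map_smul' := by intro c x; ext a; simp [LinearMap.smul_comp] } with hf
    have hfapp : ∀ x : A, ∀ a : J, f x a = LinearMap.trace F A (mul x ∘ₗ mul (a : A)) := by
      intro x a; rfl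
    set K := LinearMap.ker f with hK
    have hKmem : ∀ x : A, x ∈ K ↔ ∀ a ∈ J, LinearMap.trace F A (mul x ∘ₗ mul a) = 0 := by
      intro x
      rw [hK, LinearMap.mem_ker]
      constructor
      · intro h a ha
        have := congrFun (congrArg DFunLike.coe h) ⟨a, ha⟩
        simpa [hfapp] using this
      · intro h; ext a; simpa [hfapp] using h a a.2
    -- K has dimension at least 1
    have hrange : finrank F (LinearMap.range f) ≤ finrank F J := by
      calc finrank F (LinearMap.range f) ≤ finrank F (↥J →ₗ[F] F) :=
            Submodule.finrank_le _
        _ = finrank F J := Module.finrank_linearMap_self F F ↥J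
    have hrk := f.finrank_range_add_finrank_ker
    rw [← hK] at hrk
    have hK1 : 1 ≤ finrank F K := by omega
    -- K is an ideal
    have hKideal : ∀ y x : A, x ∈ K → mul y x ∈ K := by
      intro y x hx
      rw [hKmem]
      intro a ha
      rw [hcomm y x, hτinv x y a]
      exact (hKmem x).mp hx (mul y a) (hJ y a ha)
    -- K ∩ J = ⊥
    have hdisj : K ⊓ J = ⊥ := by
      rw [Submodule.eq_bot_iff]
      rintro x ⟨hxK, hxJ⟩
      by_contra hx0
      exact hani x hxJ hx0 ((hKmem x).mp hxK x hxJ)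
    -- dimension count
    have hsupinf := Submodule.finrank_sup_add_finrank_inf_eq K J
    rw [hdisj, finrank_bot] at hsupinf
    have hsuple : finrank F ↥(K ⊔ J) ≤ finrank F A := Submodule.finrank_le _
    have hKeq : finrank F K = 1 := by omega
    -- generator of K
    obtain ⟨v, hv0, hv⟩ := finrank_eq_one_iff'.mp hKeq
    set e : A := (v : A) with he
    have he0 : e ≠ 0 := fun h => hv0 (Subtype.ext h)
    have heK : e ∈ K := v.2
    have hmult : ∀ x : A, x ∈ K → ∃ c : F, c • e = x := by
      intro x hx
      obtain ⟨c, hc⟩ := hv ⟨x, hx⟩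
      exact ⟨c, congrArg Subtype.val hc⟩
    have hm : ∀ x : A, ∃ c : F, c • e = mul e x := by
      intro x
      exact hmult _ (by rw [hcomm]; exact hKideal x e heK)
    have hBee : LinearMap.trace F A (mul e ∘ₗ mul e) = 0 := aux_deg mul hexact e hm
    -- K ⊔ J = ⊤
    have hsup : K ⊔ J = ⊤ := by
      apply Submodule.eq_top_of_finrank_eq
      omega
    -- e is orthogonal to everything
    have : e = 0 := by
      apply hτnd
      intro y
      have hy : y ∈ K ⊔ J := by rw [hsup]; trivial
      obtain ⟨k, hk, a, ha, rfl⟩ := Submodule.mem_sup.mp hy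
      obtain ⟨c, hc⟩ := hmult k hk
      have h1 : LinearMap.trace F A (mul e ∘ₗ mul a) = 0 := (hKmem e).mp heK a ha
      have h2 : LinearMap.trace F A (mul e ∘ₗ mul k) = 0 := by
        rw [← hc]
        simp only [map_smul, LinearMap.comp_smul, map_smul, hBee, smul_zero]
      rw [map_add, LinearMap.comp_add, map_add, h1, h2, add_zero]
    exact he0 this
end

section
/- Let (A, *, h) be a finite-dimensional commutative real algebra with a positive-definite invariant symmetric bilinear form h, and suppose A has nonnegative sectional nonassociativity, i.e., h(x*x, y*y) − h(x*y, x*y) ≥ 0 for all x, y. If z ∈ A satisfies z*z = 0, then L(z) = 0; consequently, if additionally the Killing form τ(x,y) = tr(L(x)L(y)) is positive definite, then A contains no nonzero square-zero element. -/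
/-- In a Euclidean metrized commutative algebra with nonnegative sectional
nonassociativity (Norton inequality), a square-zero element z satisfies L(z) = 0;
if moreover the Killing form is positive definite there is no nonzero square-zero
element. -/
theorem stmt_18 {A : Type*} [AddCommGroup A] [Module ℝ A] [FiniteDimensional ℝ A]
    (mul : A →ₗ[ℝ] A →ₗ[ℝ] A)
    (hcomm : ∀ x y : A, mul x y = mul y x)
    (h : A →ₗ[ℝ] A →ₗ[ℝ] ℝ)
    (hsymm : ∀ x y : A, h x y = h y x)
    (hpos : ∀ x : A, x ≠ 0 → 0 < h x x)
    (hinv : ∀ x y z : A, h (mul x y) z = h x (mul y z))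
    (hnorton : ∀ x y : A, 0 ≤ h (mul x x) (mul y y) - h (mul x y) (mul x y)) :
    (∀ z : A, mul z z = 0 → ∀ y : A, mul z y = 0) ∧
    ((∀ x : A, x ≠ 0 → 0 < LinearMap.trace ℝ A (mul x ∘ₗ mul x)) →
      ∀ z : A, mul z z = 0 → z = 0) := by
  have key : ∀ z : A, mul z z = 0 → ∀ y : A, mul z y = 0 := by
    intro z hz y
    by_contra hne
    have := hnorton z y
    rw [hz] at this
    simp only [LinearMap.map_zero, LinearMap.zero_apply] at this
    have := hpos (mul z y) hne
    linarith
  refine ⟨key, fun hkill z hz => ?_⟩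
  by_contra hne
  have hL : (mul z : A →ₗ[ℝ] A) = 0 := by
    ext y; simpa using key z hz y
  have := hkill z hne
  rw [hL] at this
  simp at this
end
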